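/- Let H be a hyperbolic group with finite generating set A and word metric d_A, and let φ : H → H be an endomorphism for which the BRP holds (for every p ≥ 0 there exists q ≥ 0 such that for all u, v ∈ H, (u|v) ≤ p implies (φ(u)|φ(v)) ≤ q). Then the image subgroup φ(H) is quasiconvex: there exists q ≥ 0 such that for all g, g′ ∈ φ(H), every point in the image of every discrete geodesic from g to g′ lies within d_A-distance q of φ(H). -/

import Mathlib

/-!
Write the endpoints as `φ u`, `φ v` and join `u` to `v` by a geodesic `σ` in `H`. Every `σ k` lies
on a geodesic from `u` to `v`, so by the BRP (with `p = 0`, after translating the base point)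
`(φ u | φ v)_{φ (σ k)}` is bounded: the points `φ (σ k)` stay close to geodesics from `φ u` to
`φ v`. Since `φ` is Lipschitz, the Gromov product `(φ (σ k) | φ v)_{φ u}` runs from `0` to
`d(φ u, φ v)` in bounded steps, so for each point `γ i` of a geodesic `γ` from `φ u` to `φ v`
some `φ (σ k)` branches off near distance `i` from `φ u`. Thinness of the triangle
`φ u, φ v, φ (σ k)` then puts `γ i` within bounded distance of `φ (σ k)`.
-/

namespace Paper

variable {H : Type*} [Group H]

/-- `g` can be written as a product of `n` elements of `A ∪ A⁻¹`. -/
def WordWitness (A : Set H) (g : H) (n : ℕ) : Prop :=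
  ∃ l : List H, l.length = n ∧ (∀ x ∈ l, x ∈ A ∨ x⁻¹ ∈ A) ∧ l.prod = g

/-- The word metric on `H` with respect to the generating set `A`. -/
noncomputable def wd (A : Set H) (g h : H) : ℕ :=
  sInf {n | WordWitness A (g⁻¹ * h) n}

/-- The Gromov product `(u|v)_w` with respect to the word metric for `A`. -/
noncomputable def gp (A : Set H) (w u v : H) : ℝ :=
  ((wd A w u : ℝ) + (wd A w v : ℝ) - (wd A u v : ℝ)) / 2

/-- A discrete geodesic `γ : {0,…,n} → H` from `x` to `y` for the word metric of `A`. -/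
def IsDiscreteGeodesic (A : Set H) (n : ℕ) (γ : ℕ → H) (x y : H) : Prop :=
  γ 0 = x ∧ γ n = y ∧
    ∀ i, i ≤ n → ∀ j, j ≤ n → (wd A (γ i) (γ j) : ℤ) = |(i : ℤ) - (j : ℤ)|

/-- `H` is hyperbolic with respect to `A`: some `δ ≥ 0` satisfies the Rips thin-triangles
condition for discrete geodesics (all three sides are covered since `x, y, z` and the three
geodesics are universally quantified, and hence may be cyclically permuted). -/
def IsHyperbolic (A : Set H) : Prop :=
  ∃ δ : ℝ, 0 ≤ δ ∧ ∀ x y z : H, ∀ n₁ n₂ n₃ : ℕ, ∀ α β γ : ℕ → H,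
    IsDiscreteGeodesic A n₁ α x y → IsDiscreteGeodesic A n₂ β y z →
    IsDiscreteGeodesic A n₃ γ z x → ∀ i, i ≤ n₁ →
      ∃ j, (j ≤ n₂ ∧ (wd A (α i) (β j) : ℝ) ≤ δ) ∨
           (j ≤ n₃ ∧ (wd A (α i) (γ j) : ℝ) ≤ δ)

/-- The bounded reduction property for `φ`, in its Gromov-product formulation:
for every `p ≥ 0` there is `q ≥ 0` such that `(u|v) ≤ p` implies `(φ(u)|φ(v)) ≤ q`. -/
def BRP (A : Set H) (φ : H →* H) : Prop :=
  ∀ p : ℝ, 0 ≤ p → ∃ q : ℝ, 0 ≤ q ∧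
    ∀ u v : H, gp A 1 u v ≤ p → gp A 1 (φ u) (φ v) ≤ q

lemma wordWitness_inv_iff {A : Set H} {g : H} {n : ℕ} :
    WordWitness A g⁻¹ n ↔ WordWitness A g n := by
  suffices ∀ g : H, WordWitness A g n → WordWitness A g⁻¹ n from
    ⟨fun h => by simpa using this _ h, this g⟩
  rintro g ⟨l, hl, hmem, rfl⟩
  refine ⟨(l.map fun x => x⁻¹).reverse, by simp [hl], fun x hx => ?_,
    (List.prod_inv_reverse l).symm⟩
  obtain ⟨a, ha, rfl⟩ := List.mem_map.1 (List.mem_reverse.1 hx)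
  simpa [or_comm] using hmem a ha

lemma WordWitness.mul {A : Set H} {g h : H} {n m : ℕ} (hg : WordWitness A g n)
    (hh : WordWitness A h m) : WordWitness A (g * h) (n + m) := by
  obtain ⟨l₁, rfl, hmem₁, rfl⟩ := hg
  obtain ⟨l₂, rfl, hmem₂, rfl⟩ := hh
  refine ⟨l₁ ++ l₂, List.length_append, fun x hx => ?_, List.prod_append⟩
  exact (List.mem_append.1 hx).elim (hmem₁ x) (hmem₂ x)

lemma exists_wordWitness {A : Set H} (hgen : Subgroup.closure A = ⊤) (g : H) :
    ∃ n, WordWitness A g n := by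
  have hg : g ∈ (Subgroup.closure A).toSubmonoid := by simp [hgen]
  rw [Subgroup.closure_toSubmonoid] at hg
  obtain ⟨l, hmem, hprod⟩ := Submonoid.exists_list_of_mem_closure hg
  exact ⟨l.length, l, rfl, fun x hx => hmem x hx, hprod⟩

lemma wordWitness_wd {A : Set H} (hgen : Subgroup.closure A = ⊤) (g h : H) :
    WordWitness A (g⁻¹ * h) (wd A g h) :=
  Nat.sInf_mem (exists_wordWitness hgen _)

lemma wd_le_of_wordWitness {A : Set H} {g h : H} {n : ℕ} (hw : WordWitness A (g⁻¹ * h) n) :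
    wd A g h ≤ n :=
  Nat.sInf_le hw

lemma wd_eq_wd_one (A : Set H) (g h : H) : wd A g h = wd A 1 (g⁻¹ * h) := by
  simp [wd]

lemma wd_mul_left (A : Set H) (a g h : H) : wd A (a * g) (a * h) = wd A g h := by
  simp [wd, mul_assoc]

lemma wd_self (A : Set H) (g : H) : wd A g g = 0 :=
  Nat.le_zero.1 (wd_le_of_wordWitness ⟨[], rfl, by simp, by simp⟩)

lemma wd_comm (A : Set H) (g h : H) : wd A g h = wd A h g := by
  simp only [wd]
  congr 1
  ext n
  show WordWitness A _ n ↔ WordWitness A _ n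
  rw [← wordWitness_inv_iff, mul_inv_rev, inv_inv]

lemma wd_one_inv (A : Set H) (g : H) : wd A 1 g⁻¹ = wd A 1 g := by
  rw [wd_comm, wd_eq_wd_one, inv_inv, mul_one]

lemma wd_triangle {A : Set H} (hgen : Subgroup.closure A = ⊤) (g h k : H) :
    wd A g k ≤ wd A g h + wd A h k :=
  wd_le_of_wordWitness <| by
    simpa [mul_assoc] using (wordWitness_wd hgen g h).mul (wordWitness_wd hgen h k)

lemma wd_one_mul_le {A : Set H} (hgen : Subgroup.closure A = ⊤) (g h : H) :
    wd A 1 (g * h) ≤ wd A 1 g + wd A 1 h := by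
  calc wd A 1 (g * h) ≤ wd A 1 g + wd A g (g * h) := wd_triangle hgen 1 g (g * h)
    _ = wd A 1 g + wd A 1 h := by rw [wd_eq_wd_one A g, inv_mul_cancel_left]

lemma wd_mul_le_one {A : Set H} {a : H} (ha : a ∈ A ∨ a⁻¹ ∈ A) (g : H) :
    wd A g (g * a) ≤ 1 :=
  wd_le_of_wordWitness ⟨[a], rfl, by simpa using ha, by simp⟩

lemma exists_wd_map_le_mul {K : Type*} [Group K] {A : Set H} {B : Set K} (hA : A.Finite)
    (hgenA : Subgroup.closure A = ⊤) (hgenB : Subgroup.closure B = ⊤) (φ : H →* K) :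
    ∃ M : ℕ, ∀ g h, wd B (φ g) (φ h) ≤ M * wd A g h := by
  obtain ⟨M, hM⟩ := (hA.image fun a => wd B 1 (φ a)).bddAbove
  have hMgen : ∀ a, a ∈ A ∨ a⁻¹ ∈ A → wd B 1 (φ a) ≤ M := by
    rintro a (ha | ha)
    · exact hM ⟨a, ha, rfl⟩
    · simpa [wd_one_inv] using hM ⟨a⁻¹, ha, rfl⟩
  have hlist : ∀ l : List H, (∀ x ∈ l, x ∈ A ∨ x⁻¹ ∈ A) →
      wd B 1 (φ l.prod) ≤ M * l.length := by
    intro l hl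
    induction l with
    | nil => simp [wd_self]
    | cons a l ih =>
      calc wd B 1 (φ (a :: l).prod) ≤ wd B 1 (φ a) + wd B 1 (φ l.prod) := by
            simpa using wd_one_mul_le hgenB (φ a) (φ l.prod)
        _ ≤ M + M * l.length :=
            add_le_add (hMgen a (hl a List.mem_cons_self))
              (ih fun x hx => hl x (List.mem_cons_of_mem a hx))
        _ = M * (a :: l).length := by simp [mul_add, add_comm]
  refine ⟨M, fun g h => ?_⟩
  obtain ⟨l, hl, hmem, hprod⟩ := wordWitness_wd hgenA g h
  rw [wd_eq_wd_one, ← map_inv, ← map_mul, ← hprod, ← hl]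
  exact hlist l hmem

lemma gp_mul_left (A : Set H) (a w u v : H) : gp A (a * w) (a * u) (a * v) = gp A w u v := by
  simp [gp, wd_mul_left]

lemma gp_le_gp_add_wd {A : Set H} (hgen : Subgroup.closure A = ⊤) (w u u' v : H) :
    gp A w u' v ≤ gp A w u v + wd A u u' := by
  have h₁ : (wd A w u' : ℝ) ≤ wd A w u + wd A u u' := by exact_mod_cast wd_triangle hgen w u u'
  have h₂ : (wd A u v : ℝ) ≤ wd A u u' + wd A u' v := by exact_mod_cast wd_triangle hgen u u' v
  simp only [gp]
  linarith

namespace IsDiscreteGeodesic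

variable {A : Set H} {n : ℕ} {γ : ℕ → H} {x y : H}

lemma wd_eq_sub (hγ : IsDiscreteGeodesic A n γ x y) {i j : ℕ} (hij : i ≤ j) (hj : j ≤ n) :
    wd A (γ i) (γ j) = j - i := by
  have := hγ.2.2 i (hij.trans hj) j hj
  rw [abs_sub_comm, abs_of_nonneg (by omega)] at this
  omega

lemma wd_start (hγ : IsDiscreteGeodesic A n γ x y) {i : ℕ} (hi : i ≤ n) : wd A x (γ i) = i := by
  simpa [hγ.1] using hγ.wd_eq_sub (Nat.zero_le i) hi

lemma wd_end (hγ : IsDiscreteGeodesic A n γ x y) {i : ℕ} (hi : i ≤ n) :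
    wd A (γ i) y = n - i := by
  simpa [hγ.2.1] using hγ.wd_eq_sub hi le_rfl

lemma wd_start_end (hγ : IsDiscreteGeodesic A n γ x y) : wd A x y = n := by
  simpa [hγ.2.1] using hγ.wd_start le_rfl

lemma gp_eq_zero (hγ : IsDiscreteGeodesic A n γ x y) {k : ℕ} (hk : k ≤ n) :
    gp A (γ k) x y = 0 := by
  rw [gp, wd_comm, hγ.wd_start hk, hγ.wd_end hk, hγ.wd_start_end, Nat.cast_sub hk]
  ring

lemma gp_le_of_wd_le (hγ : IsDiscreteGeodesic A n γ x y) (hgen : Subgroup.closure A = ⊤)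
    {j : ℕ} (hj : j ≤ n) {u : H} {δ : ℝ} (hu : wd A u (γ j) ≤ δ) : gp A u x y ≤ δ := by
  have hx : (wd A u x : ℝ) ≤ wd A u (γ j) + wd A x (γ j) := by
    rw [wd_comm A x]; exact_mod_cast wd_triangle hgen u (γ j) x
  have hy : (wd A u y : ℝ) ≤ wd A u (γ j) + wd A (γ j) y := by
    exact_mod_cast wd_triangle hgen u (γ j) y
  have hxy : (wd A x (γ j) : ℝ) + wd A (γ j) y = wd A x y := by
    rw [hγ.wd_start hj, hγ.wd_end hj, hγ.wd_start_end, Nat.cast_sub hj]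
    ring
  simp only [gp]
  linarith

end IsDiscreteGeodesic

lemma isDiscreteGeodesic_of_wd_succ_le_one {A : Set H} (hgen : Subgroup.closure A = ⊤)
    {m : ℕ} {γ : ℕ → H} {x y : H} (h₀ : γ 0 = x) (hm : γ m = y) (hxy : m ≤ wd A x y)
    (hstep : ∀ k < m, wd A (γ k) (γ (k + 1)) ≤ 1) : IsDiscreteGeodesic A m γ x y := by
  have upper : ∀ i k, i + k ≤ m → wd A (γ i) (γ (i + k)) ≤ k := by
    intro i k
    induction k with
    | zero => simp [wd_self]
    | succ k ih =>
      intro hk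
      calc wd A (γ i) (γ (i + k + 1)) ≤ wd A (γ i) (γ (i + k)) + wd A (γ (i + k)) (γ (i + k + 1)) :=
            wd_triangle hgen _ _ _
        _ ≤ k + 1 := add_le_add (ih (by omega)) (hstep _ (by omega))
  have wd_eq : ∀ i k, i + k ≤ m → wd A (γ i) (γ (i + k)) = k := by
    intro i k hk
    have h₁ := upper 0 i (by omega)
    have h₂ := upper (i + k) (m - (i + k)) (by omega)
    have h₃ := wd_triangle hgen x (γ i) y
    have h₄ := wd_triangle hgen (γ i) (γ (i + k)) y
    rw [zero_add, h₀] at h₁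
    rw [Nat.add_sub_cancel' hk, hm] at h₂
    have := upper i k hk
    omega
  refine ⟨h₀, hm, fun i hi j hj => ?_⟩
  rcases le_total i j with hij | hji
  · obtain ⟨k, rfl⟩ := Nat.exists_eq_add_of_le hij
    rw [wd_eq i k hj]
    simp
  · obtain ⟨k, rfl⟩ := Nat.exists_eq_add_of_le hji
    rw [wd_comm, wd_eq j k hi]
    simp

lemma exists_isDiscreteGeodesic {A : Set H} (hgen : Subgroup.closure A = ⊤) (x y : H) :
    ∃ γ : ℕ → H, IsDiscreteGeodesic A (wd A x y) γ x y := by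
  obtain ⟨l, hl, hmem, hprod⟩ := wordWitness_wd hgen x y
  refine ⟨fun k => x * (l.take k).prod,
    isDiscreteGeodesic_of_wd_succ_le_one hgen (by simp) ?_ le_rfl fun k hk => ?_⟩
  · simp [← hl, hprod]
  · rw [List.prod_take_succ l k (by omega), ← mul_assoc]
    exact wd_mul_le_one (hmem _ (List.getElem_mem _)) _

/-- `IsHyperbolic A` unfolds to `∃ δ, 0 ≤ δ ∧ ThinTriangles A δ`. -/
def ThinTriangles (A : Set H) (δ : ℝ) : Prop :=
  ∀ x y z : H, ∀ n₁ n₂ n₃ : ℕ, ∀ α β γ : ℕ → H,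
    IsDiscreteGeodesic A n₁ α x y → IsDiscreteGeodesic A n₂ β y z →
    IsDiscreteGeodesic A n₃ γ z x → ∀ i, i ≤ n₁ →
      ∃ j, (j ≤ n₂ ∧ (wd A (α i) (β j) : ℝ) ≤ δ) ∨
           (j ≤ n₃ ∧ (wd A (α i) (γ j) : ℝ) ≤ δ)

namespace ThinTriangles

variable {A : Set H} {δ : ℝ} {n : ℕ} {γ : ℕ → H} {x y : H}

lemma gp_le_or_gp_le (hthin : ThinTriangles A δ) (hgen : Subgroup.closure A = ⊤)
    (hγ : IsDiscreteGeodesic A n γ x y) {i : ℕ} (hi : i ≤ n) (z : H) :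
    gp A (γ i) y z ≤ δ ∨ gp A (γ i) z x ≤ δ := by
  obtain ⟨β, hβ⟩ := exists_isDiscreteGeodesic hgen y z
  obtain ⟨β', hβ'⟩ := exists_isDiscreteGeodesic hgen z x
  obtain ⟨j, ⟨hj, hβj⟩ | ⟨hj, hβ'j⟩⟩ := hthin x y z _ _ _ γ β β' hγ hβ hβ' i hi
  · exact Or.inl (hβ.gp_le_of_wd_le hgen hj hβj)
  · exact Or.inr (hβ'.gp_le_of_wd_le hgen hj hβ'j)

/-- The point `γ i` of the side `[x, y]` lies near `z` as soon as `z` is almost on a geodesic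
from `x` to `y` (`(x|y)_z ≤ q`) and `(z|y)_x`, the distance from `x` at which a geodesic to `z`
leaves `[x, y]`, is close to `i`. -/
lemma wd_le_of_gp_le (hthin : ThinTriangles A δ) (hgen : Subgroup.closure A = ⊤)
    (hγ : IsDiscreteGeodesic A n γ x y) {i : ℕ} (hi : i ≤ n) {z : H} {q M : ℝ}
    (hz : gp A z x y ≤ q) (hlow : i ≤ gp A x z y) (hup : gp A x z y ≤ i + M) :
    wd A (γ i) z ≤ q + M + 2 * δ := by
  have hx : (wd A x (γ i) : ℝ) = i := by exact_mod_cast hγ.wd_start hi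
  have hy : (wd A (γ i) y : ℝ) = n - i := by rw [hγ.wd_end hi, Nat.cast_sub hi]
  have hxy : (wd A x y : ℝ) = n := by exact_mod_cast hγ.wd_start_end
  have hcomm : ∀ a b : H, (wd A a b : ℝ) = wd A b a := fun a b => by rw [wd_comm]
  rcases hthin.gp_le_or_gp_le hgen hγ hi z with h | h <;> simp only [gp] at * <;>
    linarith [hcomm x z, hcomm (γ i) x, hcomm z y, hcomm (γ i) y]

end ThinTriangles

lemma BRP.exists_gp_map_le {A : Set H} {φ : H →* H} (hbrp : BRP A φ) {p : ℝ} (hp : 0 ≤ p) :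
    ∃ q : ℝ, 0 ≤ q ∧ ∀ w u v : H, gp A w u v ≤ p → gp A (φ w) (φ u) (φ v) ≤ q := by
  have gp_eq_gp_one : ∀ w u v : H, gp A w u v = gp A 1 (w⁻¹ * u) (w⁻¹ * v) := fun w u v => by
    rw [← gp_mul_left A w⁻¹, inv_mul_cancel]
  obtain ⟨q, hq, h⟩ := hbrp p hp
  refine ⟨q, hq, fun w u v hwuv => ?_⟩
  rw [gp_eq_gp_one] at hwuv ⊢
  simpa using h _ _ hwuv

lemma exists_le_and_le_add_of_forall_le_add {f : ℕ → ℝ} {m : ℕ} {M t : ℝ} (hM : 0 ≤ M)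
    (hstep : ∀ k < m, f (k + 1) ≤ f k + M) (h₀ : f 0 ≤ t) (hm : t ≤ f m) :
    ∃ k ≤ m, t ≤ f k ∧ f k ≤ t + M := by
  classical
  have hex : ∃ k, t ≤ f k := ⟨m, hm⟩
  refine ⟨Nat.find hex, Nat.find_min' hex hm, Nat.find_spec hex, ?_⟩
  rcases Nat.eq_zero_or_pos (Nat.find hex) with hk | hk
  · rw [hk]; linarith
  · have hlt : f (Nat.find hex - 1) < t := lt_of_not_ge (Nat.find_min hex (by omega))
    have := hstep (Nat.find hex - 1) (by have := Nat.find_min' hex hm; omega)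
    rw [Nat.sub_add_cancel hk] at this
    linarith

/-- If the BRP holds for `φ`, then the image `φ(H)` is a quasiconvex subgroup. -/
theorem image_quasiconvex_of_brp
    (A : Set H) (hA : A.Finite) (hgen : Subgroup.closure A = ⊤)
    (hhyp : IsHyperbolic A) (φ : H →* H) (hbrp : BRP A φ) :
    ∃ q : ℝ, 0 ≤ q ∧ ∀ g g' : H, g ∈ φ.range → g' ∈ φ.range →
      ∀ n : ℕ, ∀ γ : ℕ → H, IsDiscreteGeodesic A n γ g g' →
        ∀ i, i ≤ n → ∃ h : H, h ∈ φ.range ∧ (wd A (γ i) h : ℝ) ≤ q := by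
  obtain ⟨δ, hδ, hthin : ThinTriangles A δ⟩ := hhyp
  obtain ⟨q₀, hq₀, hφgp⟩ := hbrp.exists_gp_map_le le_rfl
  obtain ⟨M, hM⟩ := exists_wd_map_le_mul hA hgen hgen φ
  refine ⟨q₀ + M + 2 * δ, by positivity, ?_⟩
  rintro _ _ ⟨u, rfl⟩ ⟨v, rfl⟩ n γ hγ i hi
  obtain ⟨σ, hσ⟩ := exists_isDiscreteGeodesic hgen u v
  set f : ℕ → ℝ := fun k => gp A (φ u) (φ (σ k)) (φ v)
  have hstep : ∀ k < wd A u v, f (k + 1) ≤ f k + M := fun k hk => by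
    have hφσ : (wd A (φ (σ k)) (φ (σ (k + 1))) : ℝ) ≤ M := by
      exact_mod_cast (hM _ _).trans (by rw [hσ.wd_eq_sub (by omega) hk]; simp)
    linarith [gp_le_gp_add_wd hgen (φ u) (φ (σ k)) (φ (σ (k + 1))) (φ v)]
  have h₀ : f 0 ≤ i := by simp [f, hσ.1, gp, wd_self]
  have hm : i ≤ f (wd A u v) := by simp [f, hσ.2.1, gp, wd_self, hγ.wd_start_end, hi]
  obtain ⟨k, hk, hik, hki⟩ := exists_le_and_le_add_of_forall_le_add (by positivity) hstep h₀ hm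
  exact ⟨φ (σ k), ⟨σ k, rfl⟩,
    hthin.wd_le_of_gp_le hgen hγ hi (hφgp _ _ _ (hσ.gp_eq_zero hk).le) hik hki⟩

end Paper
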